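/- arXiv:1911.08403 — 2 statements merged into one kernel-verified Lean document; each statement's English description precedes it below -/
import Mathlib

section
/- Let ℓ₁ and ℓ₂ be two disjoint parallel segments in ℝ², and let e₁, e₂ be segments each having one endpoint on ℓ₁ and the other endpoint on ℓ₂. Denote by x^{t_i} = e_i ∩ ℓ₁ and y^{t_i} = e_i ∩ ℓ₂ the endpoints, and let α_i be the acute angle formed by e_i with ℓ₁. Then dist(e₁, e₂) ≥ min( |y^{t₁} - y^{t₂}|·sin α₂, |x^{t₁} - x^{t₂}|·sin α₁ ). -/
/-!
Write `x₁ - x₂ = A • d` and `y₁ - y₂ = B • d`. For `a = (1 - s) • x₁ + s • y₁` and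
`b = (1 - r) • x₂ + r • y₂` we have `a - b = ((1 - r) * A + r * B) • d + (s - r) • (y₁ - x₁)`,
so `dist a b` is at least `|(1 - r) * A + r * B|` times the distance `‖d‖ * sin α₁` from `d` to
the line `ℝ ∙ (y₁ - x₁)`. Disjointness forces `A` and `B` to have the same sign (otherwise
`0 = θ * A + φ * B` for some convex weights, and the points with these weights on `e₁` and `e₂`
coincide), hence `|(1 - r) * A + r * B| ≥ min |A| |B|`. Exchanging the roles of `e₁` and `e₂`
gives the bound with `sin α₂`, and `|A| * ‖d‖ = dist x₁ x₂`, `|B| * ‖d‖ = dist y₁ y₂`.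
-/

open Filter Metric Set
open scoped Topology

noncomputable section

abbrev E2 : Type := EuclideanSpace ℝ (Fin 2)

open InnerProductGeometry
open scoped RealInnerProductSpace

theorem min_abs_le_abs_of_mem_segment {A B c : ℝ} (hAB : 0 ≤ A * B) (hc : c ∈ segment ℝ A B) :
    min |A| |B| ≤ |c| := by
  rw [segment_eq_uIcc] at hc
  obtain ⟨hlo, hhi⟩ := hc
  rcases mul_nonneg_iff.mp hAB with ⟨hA, hB⟩ | ⟨hA, hB⟩
  · rw [abs_of_nonneg hA, abs_of_nonneg hB]
    exact hlo.trans (le_abs_self c)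
  · rw [abs_of_nonpos hA, abs_of_nonpos hB, min_neg_neg]
    exact (neg_le_neg hhi).trans (neg_le_abs c)

theorem mul_nonneg_of_disjoint_segment {V : Type*} [AddCommGroup V] [Module ℝ V]
    {x₁ x₂ y₁ y₂ d : V} {A B : ℝ} (hx : x₁ - x₂ = A • d) (hy : y₁ - y₂ = B • d)
    (hdisj : Disjoint (segment ℝ x₁ y₁) (segment ℝ x₂ y₂)) : 0 ≤ A * B := by
  by_contra! hAB
  have hzero : (0 : ℝ) ∈ segment ℝ A B := by
    rw [segment_eq_uIcc, Set.mem_uIcc]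
    rcases mul_neg_iff.mp hAB with ⟨hA, hB⟩ | ⟨hA, hB⟩
    · exact Or.inr ⟨hB.le, hA.le⟩
    · exact Or.inl ⟨hA.le, hB.le⟩
  obtain ⟨θ, φ, hθ, hφ, hθφ, hsum⟩ := hzero
  have hmeet : θ • x₁ + φ • y₁ = θ • x₂ + φ • y₂ := by
    simp only [smul_eq_mul] at hsum
    linear_combination (norm := module) θ • hx + φ • hy + hsum • d
  exact Set.disjoint_left.mp hdisj ⟨θ, φ, hθ, hφ, hθφ, rfl⟩ (hmeet ▸ ⟨θ, φ, hθ, hφ, hθφ, rfl⟩)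

section

variable {V : Type*} [NormedAddCommGroup V] [InnerProductSpace ℝ V]

theorem InnerProductGeometry.norm_mul_sin_angle_le_norm_add_smul (x y : V) (μ : ℝ) :
    ‖x‖ * Real.sin (angle x y) ≤ ‖x + μ • y‖ := by
  rcases eq_or_ne y 0 with rfl | hy
  · simp
  have hy' : 0 < ‖y‖ := norm_pos_iff.mpr hy
  rw [← mul_le_mul_iff_of_pos_right hy', mul_comm ‖x‖, mul_assoc, sin_angle_mul_norm_mul_norm,
    Real.sqrt_le_left (by positivity), mul_pow, ← real_inner_self_eq_norm_sq,
    ← real_inner_self_eq_norm_sq]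
  simp only [inner_add_left, inner_add_right, real_inner_smul_left, real_inner_smul_right,
    real_inner_comm x y]
  nlinarith [sq_nonneg (μ * ⟪y, y⟫ + ⟪x, y⟫)]

theorem InnerProductGeometry.abs_mul_norm_mul_sin_angle_le_norm_smul_add_smul (x y : V)
    (c μ : ℝ) : |c| * (‖x‖ * Real.sin (angle x y)) ≤ ‖c • x + μ • y‖ := by
  rcases eq_or_ne c 0 with rfl | hc
  · simp
  have hfactor : c • x + μ • y = c • (x + (μ / c) • y) := by
    rw [smul_add, smul_smul, mul_div_cancel₀ μ hc]
  rw [hfactor, norm_smul, Real.norm_eq_abs]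
  exact mul_le_mul_of_nonneg_left (norm_mul_sin_angle_le_norm_add_smul x y _) (abs_nonneg c)

theorem min_abs_mul_norm_mul_sin_angle_le_dist {x₁ x₂ y₁ y₂ d a b : V} {A B : ℝ}
    (hx : x₁ - x₂ = A • d) (hy : y₁ - y₂ = B • d) (hAB : 0 ≤ A * B)
    (ha : a ∈ segment ℝ x₁ y₁) (hb : b ∈ segment ℝ x₂ y₂) :
    min |A| |B| * (‖d‖ * Real.sin (angle (y₁ - x₁) d)) ≤ dist a b := by
  rw [segment_eq_image] at ha hb
  obtain ⟨s, -, rfl⟩ := ha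
  obtain ⟨r, ⟨hr0, hr1⟩, rfl⟩ := hb
  have hdiff : (1 - s) • x₁ + s • y₁ - ((1 - r) • x₂ + r • y₂)
      = ((1 - r) * A + r * B) • d + (s - r) • (y₁ - x₁) := by
    linear_combination (norm := module) (1 - r) • hx + r • hy
  have hcombo : (1 - r) * A + r * B ∈ segment ℝ A B :=
    ⟨1 - r, r, by linarith, hr0, by ring, rfl⟩
  rw [dist_eq_norm, hdiff, angle_comm]
  calc min |A| |B| * (‖d‖ * Real.sin (angle d (y₁ - x₁)))
      ≤ |(1 - r) * A + r * B| * (‖d‖ * Real.sin (angle d (y₁ - x₁))) :=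
        mul_le_mul_of_nonneg_right (min_abs_le_abs_of_mem_segment hAB hcombo)
          (mul_nonneg (norm_nonneg d) (sin_angle_nonneg _ _))
    _ ≤ _ := abs_mul_norm_mul_sin_angle_le_norm_smul_add_smul _ _ _ _

theorem min_dist_mul_sin_angle_le_dist_of_disjoint_segment {x₁ x₂ y₁ y₂ d a b : V} {A B : ℝ}
    (hx : x₁ - x₂ = A • d) (hy : y₁ - y₂ = B • d)
    (hdisj : Disjoint (segment ℝ x₁ y₁) (segment ℝ x₂ y₂))
    (ha : a ∈ segment ℝ x₁ y₁) (hb : b ∈ segment ℝ x₂ y₂) :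
    min (dist y₁ y₂ * Real.sin (angle (y₂ - x₂) d))
      (dist x₁ x₂ * Real.sin (angle (y₁ - x₁) d)) ≤ dist a b := by
  have hAB := mul_nonneg_of_disjoint_segment hx hy hdisj
  have h₁ := min_abs_mul_norm_mul_sin_angle_le_dist hx hy hAB ha hb
  have h₂ := min_abs_mul_norm_mul_sin_angle_le_dist (A := -A) (B := -B)
    (by rw [← neg_sub, hx, neg_smul]) (by rw [← neg_sub, hy, neg_smul])
    (by rwa [neg_mul_neg]) hb ha
  rw [abs_neg, abs_neg, dist_comm] at h₂
  rw [dist_eq_norm x₁, dist_eq_norm y₁, hx, hy, norm_smul, norm_smul, Real.norm_eq_abs,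
    Real.norm_eq_abs]
  rcases le_total |A| |B| with h | h
  · rw [min_eq_left h] at h₁
    exact (min_le_right _ _).trans (by linarith)
  · rw [min_eq_right h] at h₂
    exact (min_le_left _ _).trans (by linarith)

end

theorem stmt_5_general (p q d : E2)
    (x₁ x₂ y₁ y₂ : E2)
    (hx₁ : ∃ t : ℝ, x₁ = p + t • d) (hx₂ : ∃ t : ℝ, x₂ = p + t • d)
    (hy₁ : ∃ t : ℝ, y₁ = q + t • d) (hy₂ : ∃ t : ℝ, y₂ = q + t • d)
    (hdisj : Disjoint (segment ℝ x₁ y₁) (segment ℝ x₂ y₂)) :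
    ∀ a ∈ segment ℝ x₁ y₁, ∀ b ∈ segment ℝ x₂ y₂,
      min (dist y₁ y₂ * Real.sin (InnerProductGeometry.angle (y₂ - x₂) d))
          (dist x₁ x₂ * Real.sin (InnerProductGeometry.angle (y₁ - x₁) d)) ≤ dist a b := by
  obtain ⟨u₁, rfl⟩ := hx₁
  obtain ⟨u₂, rfl⟩ := hx₂
  obtain ⟨v₁, rfl⟩ := hy₁
  obtain ⟨v₂, rfl⟩ := hy₂
  intro a ha b hb
  exact min_dist_mul_sin_angle_le_dist_of_disjoint_segment (A := u₁ - u₂) (B := v₁ - v₂)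
    (by module) (by module) hdisj ha hb

/-- for disjoint transversal segments `e₁ = [x₁,y₁]`, `e₂ = [x₂,y₂]` joining two
disjoint parallel lines (through `p`, resp. `q`, with direction `d`),
`dist(e₁, e₂) ≥ min(|y₁−y₂| sin α₂, |x₁−x₂| sin α₁)` where `αᵢ` is the angle `eᵢ` forms
with the direction `d`. -/
theorem stmt_5 (p q d : E2) (hd : d ≠ 0) (hsep : ∀ t : ℝ, p ≠ q + t • d)
    (x₁ x₂ y₁ y₂ : E2)
    (hx₁ : ∃ t : ℝ, x₁ = p + t • d) (hx₂ : ∃ t : ℝ, x₂ = p + t • d)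
    (hy₁ : ∃ t : ℝ, y₁ = q + t • d) (hy₂ : ∃ t : ℝ, y₂ = q + t • d)
    (hdisj : Disjoint (segment ℝ x₁ y₁) (segment ℝ x₂ y₂)) :
    ∀ a ∈ segment ℝ x₁ y₁, ∀ b ∈ segment ℝ x₂ y₂,
      min (dist y₁ y₂ * Real.sin (InnerProductGeometry.angle (y₂ - x₂) d))
          (dist x₁ x₂ * Real.sin (InnerProductGeometry.angle (y₁ - x₁) d)) ≤ dist a b :=
  stmt_5_general p q d x₁ x₂ y₁ y₂ hx₁ hx₂ hy₁ hy₂ hdisj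

end
end

section
/- Let Ω ⊂ ℝ² be an open bounded convex set whose boundary contains a side ℓ = [p_l, p_r] (a maximal segment of frontier Ω), and suppose the boundary of Ω forms obtuse angles with ℓ at both endpoints p_l and p_r. Let S(ℓ) = { x ∈ Ω : the orthogonal projection of x onto the line through ℓ lies in ℓ }. Then there exists c₀ > 0 such that for every point q in the relative interior of ℓ with dist(q, {p_l, p_r}) bounded away from 0, dist(q, (frontier Ω ∩ closure S(ℓ)) \ ℓ) ≥ c₀. -/
open Filter Metric Set
open scoped Topology RealInnerProductSpace

noncomputable section

/-!
Near a relative interior point `q` of the side, the frontier of `Ω` is the side itself. Take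
barycentric coordinates with respect to a point `x₀ ∈ Ω` off the line of the side and the two
endpoints: near `q` the two endpoint coordinates are positive, so a frontier point `w` close to `q`
lies on the ray from `x₀` through a point of the side; since a ray from an interior point of an open
convex set meets the frontier only once, `w` is that point. The points of the side at distance
`≥ δ` from both endpoints form a compact subset of its relative interior, hence lie at positive
distance from the closed set `closure (frontier Ω \ side)`.
-/

section

variable {V : Type*} [NormedAddCommGroup V] [NormedSpace ℝ V] {Ω : Set V}

theorem Convex.eq_one_of_mem_frontier_of_sub_eq_smul (hc : Convex ℝ Ω) (hO : IsOpen Ω)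
    {x₀ p w : V} (hx₀ : x₀ ∈ Ω) (hp : p ∈ frontier Ω) (hw : w ∈ frontier Ω) {s : ℝ}
    (hs : 0 < s) (hsw : w - x₀ = s • (p - x₀)) : s = 1 := by
  have hseg : ∀ y ∈ frontier Ω, openSegment ℝ x₀ y ⊆ Ω := fun y hy => by
    simpa only [hO.interior_eq] using hc.openSegment_interior_closure_subset_interior
      (by rwa [hO.interior_eq]) (frontier_subset_closure hy)
  have hnotMem : ∀ x ∈ frontier Ω, x ∉ Ω := fun x hx => (hO.frontier_eq ▸ hx).2
  rcases lt_trichotomy s 1 with hlt | heq | hgt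
  · refine absurd (hseg p hp ?_) (hnotMem w hw)
    rw [openSegment_eq_image']
    exact ⟨s, ⟨hs, hlt⟩, by simp only [← hsw]; abel⟩
  · exact heq
  · refine absurd (hseg w hw ?_) (hnotMem p hp)
    rw [openSegment_eq_image']
    refine ⟨s⁻¹, ⟨inv_pos.2 hs, inv_lt_one_of_one_lt₀ hgt⟩, ?_⟩
    simp only [hsw, smul_smul, inv_mul_cancel₀ hs.ne', one_smul]
    abel

theorem IsOpen.exists_mem_notMem_line (hO : IsOpen Ω) (hne : Ω.Nonempty)
    (hV : 1 < Module.finrank ℝ V) (pl pr : V) :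
    ∃ x₀ ∈ Ω, x₀ ∉ line[ℝ, pl, pr] := by
  by_contra! h
  have htop : line[ℝ, pl, pr] = ⊤ :=
    top_unique (hO.affineSpan_eq_top hne ▸ affineSpan_le.mpr h)
  have := (collinear_pair ℝ pl pr).finrank_le_one
  rw [← direction_affineSpan, htop, AffineSubspace.direction_top, finrank_top] at this
  omega

theorem Convex.notMem_closure_frontier_diff_segment [FiniteDimensional ℝ V]
    (hV : Module.finrank ℝ V = 2) (hc : Convex ℝ Ω) (hO : IsOpen Ω) (hne : Ω.Nonempty)
    {pl pr : V} (hlr : pl ≠ pr) (hside : segment ℝ pl pr ⊆ frontier Ω)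
    {q : V} (hq : q ∈ openSegment ℝ pl pr) :
    q ∉ closure (frontier Ω \ segment ℝ pl pr) := by
  obtain ⟨x₀, hx₀, hx₀_line⟩ := hO.exists_mem_notMem_line hne (by omega) pl pr
  have hind : AffineIndependent ℝ ![x₀, pl, pr] :=
    affineIndependent_of_ne_of_notMem_of_mem_of_mem hlr hx₀_line
      (left_mem_affineSpan_pair ℝ pl pr) (right_mem_affineSpan_pair ℝ pl pr)
  let b : AffineBasis (Fin 3) ℝ V :=
    ⟨_, hind, hind.affineSpan_eq_top_iff_card_eq_finrank_add_one.mpr (by simp [hV])⟩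
  obtain ⟨t, ⟨ht0, ht1⟩, rfl⟩ := (openSegment_eq_image_lineMap ℝ pl pr).subset hq
  have h1 : ∀ᶠ w in 𝓝 (AffineMap.lineMap pl pr t), 0 < b.coord 1 w := by
    refine (continuous_barycentric_coord b 1).continuousAt.eventually_const_lt ?_
    rw [AffineMap.apply_lineMap, show pl = b 1 from rfl, show pr = b 2 from rfl,
      b.coord_apply_eq, b.coord_apply_ne (by decide), AffineMap.lineMap_apply_ring]
    linarith
  have h2 : ∀ᶠ w in 𝓝 (AffineMap.lineMap pl pr t), 0 < b.coord 2 w := by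
    refine (continuous_barycentric_coord b 2).continuousAt.eventually_const_lt ?_
    rw [AffineMap.apply_lineMap, show pl = b 1 from rfl, show pr = b 2 from rfl,
      b.coord_apply_eq, b.coord_apply_ne (by decide), AffineMap.lineMap_apply_ring]
    linarith
  rw [mem_closure_iff_frequently, not_frequently]
  filter_upwards [h1, h2] with w hw1 hw2 ⟨hw, hws⟩
  obtain ⟨σ, hσ_def⟩ : ∃ σ, σ = b.coord 1 w + b.coord 2 w := ⟨_, rfl⟩
  have hσ : 0 < σ := hσ_def ▸ add_pos hw1 hw2
  -- `p` is where the ray from `x₀` through `w` crosses the side.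
  set p := AffineMap.lineMap pl pr (b.coord 2 w / σ)
  have hp : p ∈ segment ℝ pl pr := by
    rw [segment_eq_image_lineMap]
    exact ⟨_, ⟨by positivity, div_le_one_of_le₀ (by linarith) hσ.le⟩, rfl⟩
  have hwp : w - x₀ = σ • (p - x₀) := by
    have hsum := b.sum_coord_apply_eq_one w
    have hcomb := b.linear_combination_coord_eq_self w
    simp only [Fin.sum_univ_three] at hsum hcomb
    have hdiv : b.coord 2 w / σ * σ = b.coord 2 w := div_mul_cancel₀ _ hσ.ne'
    simp only [p, AffineMap.lineMap_apply_module']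
    change _ • x₀ + _ • pl + _ • pr = w at hcomb
    generalize b.coord 2 w / σ = μ at hdiv ⊢
    linear_combination (norm := module) -hcomb + hsum • x₀ - hdiv • (pr - pl) - hσ_def • (pl - x₀)
  have hσ1 := hc.eq_one_of_mem_frontier_of_sub_eq_smul hO hx₀ (hside hp) hw hσ hwp
  rw [hσ1, one_smul, sub_left_inj] at hwp
  exact hws (hwp ▸ hp)

theorem stmt_8_general (Ω : Set E2) (hO : IsOpen Ω)
    (hc : Convex ℝ Ω) (hne : Ω.Nonempty)
    (pl pr : E2) (hlr : pl ≠ pr) (hside : segment ℝ pl pr ⊆ frontier Ω) :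
    ∀ δ > 0, ∃ c₀ > 0, ∀ q ∈ segment ℝ pl pr, δ ≤ dist q pl → δ ≤ dist q pr →
      ∀ w ∈ (frontier Ω ∩
          closure {x ∈ Ω | 0 ≤ ⟪x - pl, pr - pl⟫ ∧ ⟪x - pr, pr - pl⟫ ≤ 0}) \
          segment ℝ pl pr,
        c₀ ≤ dist q w := by
  intro δ hδ
  set Q := {q ∈ segment ℝ pl pr | δ ≤ dist q pl ∧ δ ≤ dist q pr}
  have hQ : IsCompact Q := by
    refine IsCompact.inter_right ?_ ((isClosed_le continuous_const (continuous_id.dist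
      continuous_const)).inter (isClosed_le continuous_const (continuous_id.dist continuous_const)))
    rw [segment_eq_image_lineMap]
    exact isCompact_Icc.image AffineMap.lineMap_continuous
  have hQC : Disjoint Q (closure (frontier Ω \ segment ℝ pl pr)) := by
    refine Set.disjoint_left.mpr fun q ⟨hq, hql, hqr⟩ => ?_
    refine hc.notMem_closure_frontier_diff_segment finrank_euclideanSpace_fin hO hne hlr hside
      (mem_openSegment_of_ne_left_right ?_ ?_ hq)
    · exact fun h => hδ.not_ge (by simpa [← h] using hql)
    · exact fun h => hδ.not_ge (by simpa [← h] using hqr)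
  obtain ⟨r, hr, hsep⟩ := exists_pos_forall_lt_edist hQ isClosed_closure hQC
  refine ⟨r, hr, fun q hq hql hqr w hw => ?_⟩
  have := hsep q ⟨hq, hql, hqr⟩ w (subset_closure ⟨hw.1.1, hw.2⟩)
  rw [edist_dist] at this
  exact (ENNReal.coe_lt_ofReal.mp this).le

/-- for an open bounded convex `Ω ⊆ ℝ²` having a side `ℓ = [pl, pr]` in its
boundary that forms obtuse (≥ π/2) angles with the rest of the boundary at both endpoints,
points of `ℓ` at distance ≥ δ from both endpoints are at distance ≥ c₀ > 0 from
`(frontier Ω ∩ closure S(ℓ)) \ ℓ`, where `S(ℓ)` is the perpendicular strip over `ℓ`. -/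
theorem stmt_8 (Ω : Set E2) (hO : IsOpen Ω) (hb : Bornology.IsBounded Ω)
    (hc : Convex ℝ Ω) (hne : Ω.Nonempty)
    (pl pr : E2) (hlr : pl ≠ pr) (hside : segment ℝ pl pr ⊆ frontier Ω)
    (hobl : ∃ ε > 0, ∀ w ∈ frontier Ω, w ∉ segment ℝ pl pr → dist w pl < ε →
      ⟪w - pl, pr - pl⟫ ≤ 0)
    (hobr : ∃ ε > 0, ∀ w ∈ frontier Ω, w ∉ segment ℝ pl pr → dist w pr < ε →
      ⟪w - pr, pl - pr⟫ ≤ 0) :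
    ∀ δ > 0, ∃ c₀ > 0, ∀ q ∈ segment ℝ pl pr, δ ≤ dist q pl → δ ≤ dist q pr →
      ∀ w ∈ (frontier Ω ∩
          closure {x ∈ Ω | 0 ≤ ⟪x - pl, pr - pl⟫ ∧ ⟪x - pr, pr - pl⟫ ≤ 0}) \
          segment ℝ pl pr,
        c₀ ≤ dist q w :=
  stmt_8_general Ω hO hc hne pl pr hlr hside

end
end
end
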